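/- For all integers p < m < n, the composition map of the category 𝒥 is continuous on one-point compactifications: the map c : OnePoint (J(n,m)) × OnePoint (J(m,p)) → OnePoint (J(n,p)) defined by c(s,t) = s + t when both s and t are finite points, and c(s,t) = ∞ when s = ∞ or t = ∞, is continuous. -/

import Mathlib

/-!
On finite points `c` is addition, so `c = OnePoint.map (+) ∘ smash`, where `smash` sends a pair
to `∞` as soon as one entry is `∞`. The map `smash` is continuous because a compact subset of
`X × Y` lies in the product of its two compact projections. `OnePoint.map (+)` is continuous
because addition is proper: summands are nonnegative, so a bound on the sum bounds both
summands, and closed sets of nonnegative sequences bounded above are compact.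
-/

open OnePoint

/-- For integers `m < n`, `J n m` is the set of sequences `t : ℤ → ℝ` with `t i ≥ 0`
for all `i`, and `t i = 0` unless `m < i < n`, topologized as a subspace of `ℤ → ℝ`. -/
def J (n m : ℤ) : Set (ℤ → ℝ) :=
  {t | (∀ i, 0 ≤ t i) ∧ ∀ i, ¬ (m < i ∧ i < n) → t i = 0}

open Topology Filter Set

namespace OnePoint

variable {X Y : Type*}

/-- The quotient map `X⁺ × Y⁺ → X⁺ ∧ Y⁺` onto the smash product, which is `(X × Y)⁺` when `X` and
`Y` are locally compact Hausdorff. -/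
def smash (q : OnePoint X × OnePoint Y) : OnePoint (X × Y) :=
  Option.map₂ Prod.mk q.1 q.2

@[simp]
lemma smash_coe_coe (x : X) (y : Y) : smash ((x : OnePoint X), (y : OnePoint Y)) = ↑(x, y) :=
  rfl

@[simp]
lemma smash_infty_left (b : OnePoint Y) : smash ((∞ : OnePoint X), b) = ∞ :=
  rfl

@[simp]
lemma smash_infty_right (a : OnePoint X) : smash (a, (∞ : OnePoint Y)) = ∞ :=
  Option.map₂_none_right _ _

variable [TopologicalSpace X] [TopologicalSpace Y] [T2Space X] [T2Space Y]

lemma continuousAt_smash_of_eq_infty {q : OnePoint X × OnePoint Y} (hq : smash q = ∞) :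
    ContinuousAt smash q := by
  rw [ContinuousAt, hq]
  refine le_nhds_infty.2 fun K _ hK => ?_
  have hK₁ : IsCompact (Prod.fst '' K) := hK.image continuous_fst
  have hK₂ : IsCompact (Prod.snd '' K) := hK.image continuous_snd
  set W : Set (OnePoint X × OnePoint Y) :=
    ((((↑) : X → OnePoint X) '' (Prod.fst '' K)) ×ˢ (((↑) : Y → OnePoint Y) '' (Prod.snd '' K)))ᶜ
  have hW : IsOpen W :=
    ((isClosed_image_coe.2 ⟨hK₁.isClosed, hK₁⟩).prod
      (isClosed_image_coe.2 ⟨hK₂.isClosed, hK₂⟩)).isOpen_compl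
  obtain ⟨a, b⟩ := q
  have hqW : (a, b) ∈ W := by
    rintro ⟨⟨x, -, rfl⟩, ⟨y, -, rfl⟩⟩
    exact coe_ne_infty _ hq
  refine mem_map.2 <| mem_of_superset (hW.mem_nhds hqW) ?_
  rintro ⟨a', b'⟩ hab
  induction a' using OnePoint.rec with
  | infty => simp
  | coe x =>
    induction b' using OnePoint.rec with
    | infty => simp
    | coe y =>
      refine Or.inl ⟨(x, y), fun hxy => hab ⟨?_, ?_⟩, rfl⟩
      exacts [mem_image_of_mem _ (mem_image_of_mem _ hxy),
        mem_image_of_mem _ (mem_image_of_mem _ hxy)]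

lemma continuous_smash :
    Continuous (smash : OnePoint X × OnePoint Y → OnePoint (X × Y)) := by
  refine continuous_iff_continuousAt.2 fun ⟨a, b⟩ => ?_
  induction a using OnePoint.rec with
  | infty => exact continuousAt_smash_of_eq_infty (smash_infty_left b)
  | coe x =>
    induction b using OnePoint.rec with
    | infty => exact continuousAt_smash_of_eq_infty (smash_infty_right _)
    | coe y =>
      refine (isOpenEmbedding_coe.prodMap isOpenEmbedding_coe).continuousAt_iff
        (g := smash) (x := (x, y)) |>.1 ?_
      exact (continuous_coe (X := X × Y)).continuousAt

end OnePoint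

section SumOfNonneg

variable {ι : Type*} {s t u : Set (ι → ℝ)} (f : s × t → u)
  (hf : ∀ x, (f x : ι → ℝ) = x.1 + x.2)

include hf

lemma continuous_of_val_eq_add : Continuous f :=
  continuous_induced_rng.2 <| by simp_rw [Function.comp_def, hf]; fun_prop

lemma tendsto_coclosedCompact_of_val_eq_add (hs : IsClosed s) (ht : IsClosed t)
    (hs₀ : s ⊆ Ici 0) (ht₀ : t ⊆ Ici 0) :
    Tendsto f (coclosedCompact (s × t)) (coclosedCompact u) := by
  rw [coclosedCompact_eq_cocompact, coclosedCompact_eq_cocompact]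
  refine hasBasis_cocompact.tendsto_iff hasBasis_cocompact |>.2 fun K hK => ?_
  obtain ⟨B, hB⟩ : BddAbove (Subtype.val '' K) :=
    bddAbove_pi.2 fun i => ((hK.image continuous_subtype_val).image (continuous_apply i)).bddAbove
  have hbox {v : Set (ι → ℝ)} (hv : IsClosed v) : IsCompact (Subtype.val ⁻¹' Icc 0 B : Set v) :=
    IsInducing.subtypeVal.isCompact_preimage (by rwa [Subtype.range_coe]) isCompact_Icc
  refine ⟨_, (hbox hs).prod (hbox ht), fun x hx hfx => hx ⟨⟨hs₀ x.1.2, ?_⟩, ⟨ht₀ x.2.2, ?_⟩⟩⟩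
  · calc (x.1 : ι → ℝ) ≤ x.1 + x.2 := le_add_of_nonneg_right (ht₀ x.2.2)
      _ ≤ B := hf x ▸ hB (mem_image_of_mem _ hfx)
  · calc (x.2 : ι → ℝ) ≤ x.1 + x.2 := le_add_of_nonneg_left (hs₀ x.1.2)
      _ ≤ B := hf x ▸ hB (mem_image_of_mem _ hfx)

end SumOfNonneg

lemma isClosed_J (n m : ℤ) : IsClosed (J n m) := by
  simp only [J, ofPred_and, ofPred_forall]
  exact (isClosed_iInter fun i => isClosed_le continuous_const (continuous_apply i)).inter
    (isClosed_iInter fun i => isClosed_iInter fun _ =>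
      isClosed_eq (continuous_apply i) continuous_const)

lemma J_subset_Ici (n m : ℤ) : J n m ⊆ Ici 0 := fun _ ht => ht.1

theorem stmt3_general (p m n : ℤ)
    (ι : J n m × J m p → J n p)
    (hι : ∀ x : J n m × J m p, ((ι x : ℤ → ℝ)) = (x.1 : ℤ → ℝ) + (x.2 : ℤ → ℝ))
    (c : OnePoint (J n m) × OnePoint (J m p) → OnePoint (J n p))
    (hc : ∀ (s : J n m) (t : J m p), c (↑s, ↑t) = ↑(ι (s, t)))
    (hc₁ : ∀ y : OnePoint (J m p), c (∞, y) = ∞)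
    (hc₂ : ∀ x : OnePoint (J n m), c (x, ∞) = ∞) :
    Continuous c := by
  have hc_eq : c = OnePoint.map ι ∘ OnePoint.smash := by
    funext ⟨a, b⟩
    induction a using OnePoint.rec <;> induction b using OnePoint.rec <;> simp [hc, hc₁, hc₂]
  rw [hc_eq]
  refine (continuous_map (continuous_of_val_eq_add ι hι) ?_).comp continuous_smash
  exact tendsto_coclosedCompact_of_val_eq_add ι hι (isClosed_J n m) (isClosed_J m p)
    (J_subset_Ici n m) (J_subset_Ici m p)

/-- For all integers `p < m < n`, the composition map of the category `𝒥` is continuous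
on one-point compactifications: the map
`c : OnePoint (J(n,m)) × OnePoint (J(m,p)) → OnePoint (J(n,p))` defined by
`c(s,t) = s + t` when both `s` and `t` are finite points, and `c(s,t) = ∞` when `s = ∞`
or `t = ∞`, is continuous. -/
theorem stmt3 (p m n : ℤ) (hpm : p < m) (hmn : m < n)
    (ι : J n m × J m p → J n p)
    (hι : ∀ x : J n m × J m p, ((ι x : ℤ → ℝ)) = (x.1 : ℤ → ℝ) + (x.2 : ℤ → ℝ))
    (c : OnePoint (J n m) × OnePoint (J m p) → OnePoint (J n p))
    (hc : ∀ (s : J n m) (t : J m p), c (↑s, ↑t) = ↑(ι (s, t)))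
    (hc₁ : ∀ y : OnePoint (J m p), c (∞, y) = ∞)
    (hc₂ : ∀ x : OnePoint (J n m), c (x, ∞) = ∞) :
    Continuous c :=
  stmt3_general p m n ι hι c hc hc₁ hc₂
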